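/- The only real numbers c_{k,ℓ} (k, ℓ ∈ {-1,0,1}) satisfying ∑_{k=-1}^{1} ∑_{ℓ=-1}^{1} c_{k,ℓ} p(k,ℓ) = 0 for every harmonic polynomial p of total degree at most 8 are c_{k,ℓ} = 0 for all k, ℓ. Consequently, no nontrivial compact 9-point stencil can be exact on all harmonic polynomials of degree 8, and the maximum accuracy order of a compact finite difference scheme for the 2D Poisson equation is six. -/
import Mathlib


open Finset MvPolynomial

private lemma pd_ofNat (i : Fin 2) (n : ℕ) [n.AtLeastTwo] :
    pderiv i (no_index (OfNat.ofNat n) : MvPolynomial (Fin 2) ℝ) = 0 :=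
  Derivation.map_natCast (pderiv i) n

private noncomputable def M (a : ℝ) (m n : ℕ) : MvPolynomial (Fin 2) ℝ :=
  C a * (X 0)^m * (X 1)^n

private lemma degM (a : ℝ) (m n : ℕ) : (M a m n).totalDegree ≤ m + n := by
  unfold M
  refine le_trans (totalDegree_mul _ _) ?_
  have h1 : (C a * (X 0)^m : MvPolynomial (Fin 2) ℝ).totalDegree ≤ m := by
    refine le_trans (totalDegree_mul _ _) ?_
    simp [totalDegree_X_pow]
  have h2 : ((X 1 : MvPolynomial (Fin 2) ℝ)^n).totalDegree ≤ n := by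
    simp [totalDegree_X_pow]
  omega

theorem no_nontrivial_stencil_deg8 (c : ℤ → ℤ → ℝ)
    (hc : ∀ p : MvPolynomial (Fin 2) ℝ, p.totalDegree ≤ 8 →
      pderiv 0 (pderiv 0 p) + pderiv 1 (pderiv 1 p) = 0 →
      ∑ k ∈ Finset.Icc (-1 : ℤ) 1, ∑ l ∈ Finset.Icc (-1 : ℤ) 1,
        c k l * eval ![(k : ℝ), (l : ℝ)] p = 0) :
    ∀ k ∈ Finset.Icc (-1 : ℤ) 1, ∀ l ∈ Finset.Icc (-1 : ℤ) 1, c k l = 0 := by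
  have hI : (Finset.Icc (-1 : ℤ) 1) = {-1, 0, 1} := by decide
  have key : ∀ p : MvPolynomial (Fin 2) ℝ, p.totalDegree ≤ 8 →
      pderiv 0 (pderiv 0 p) + pderiv 1 (pderiv 1 p) = 0 →
      c (-1) (-1) * eval ![-1, -1] p + c (-1) 0 * eval ![-1, 0] p + c (-1) 1 * eval ![-1, 1] p +
      (c 0 (-1) * eval ![0, -1] p + c 0 0 * eval ![0, 0] p + c 0 1 * eval ![0, 1] p) +
      (c 1 (-1) * eval ![1, -1] p + c 1 0 * eval ![1, 0] p + c 1 1 * eval ![1, 1] p) = 0 := by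
    intro p hd hh
    have := hc p hd hh
    rw [hI] at this
    simpa [Finset.sum_insert, Finset.mem_insert, add_assoc] using this
  have h0 := key (M 1 0 0) (le_trans (degM _ _ _) (by norm_num))
    (by unfold M; simp [pderiv_X, pd_ofNat, map_ofNat])
  have h1 := key (M 1 1 0) (le_trans (degM _ _ _) (by norm_num))
    (by unfold M; simp [pderiv_X, pd_ofNat, map_ofNat])
  have h2 := key (M 1 0 1) (le_trans (degM _ _ _) (by norm_num))
    (by unfold M; simp [pderiv_X, pd_ofNat, map_ofNat])
  have h3 := key (M 1 1 1) (le_trans (degM _ _ _) (by norm_num))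
    (by unfold M; simp [pderiv_X, pd_ofNat, map_ofNat] <;> ring)
  have h4 := key (M 1 2 0 - M 1 0 2)
    (le_trans (totalDegree_sub _ _) (max_le (le_trans (degM _ _ _) (by norm_num))
      (le_trans (degM _ _ _) (by norm_num))))
    (by unfold M; simp [pderiv_X, pd_ofNat, map_ofNat] <;> ring)
  have h5 := key (M 1 3 0 - M 3 1 2)
    (le_trans (totalDegree_sub _ _) (max_le (le_trans (degM _ _ _) (by norm_num))
      (le_trans (degM _ _ _) (by norm_num))))
    (by unfold M; simp [pderiv_X, pd_ofNat, map_ofNat] <;> ring)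
  have h6 := key (M 3 2 1 - M 1 0 3)
    (le_trans (totalDegree_sub _ _) (max_le (le_trans (degM _ _ _) (by norm_num))
      (le_trans (degM _ _ _) (by norm_num))))
    (by unfold M; simp [pderiv_X, pd_ofNat, map_ofNat] <;> ring)
  have h7 := key (M 1 4 0 - M 6 2 2 + M 1 0 4)
    (le_trans (totalDegree_add _ _) (max_le
      (le_trans (totalDegree_sub _ _) (max_le (le_trans (degM _ _ _) (by norm_num))
        (le_trans (degM _ _ _) (by norm_num))))
      (le_trans (degM _ _ _) (by norm_num))))
    (by unfold M; simp [pderiv_X, pd_ofNat, map_ofNat] <;> ring)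
  have h8 := key (M 1 8 0 - M 28 6 2 + M 70 4 4 - M 28 2 6 + M 1 0 8)
    (le_trans (totalDegree_add _ _) (max_le
      (le_trans (totalDegree_sub _ _) (max_le
        (le_trans (totalDegree_add _ _) (max_le
          (le_trans (totalDegree_sub _ _) (max_le (le_trans (degM _ _ _) (by norm_num))
            (le_trans (degM _ _ _) (by norm_num))))
          (le_trans (degM _ _ _) (by norm_num))))
        (le_trans (degM _ _ _) (by norm_num))))
      (le_trans (degM _ _ _) (by norm_num))))
    (by unfold M; simp [pderiv_X, pd_ofNat, map_ofNat] <;> ring)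
  simp only [M, map_sub, map_add, map_mul, eval_C, eval_pow, eval_X,
    Matrix.cons_val_zero, Matrix.cons_val_one, Matrix.head_cons] at h0 h1 h2 h3 h4 h5 h6 h7 h8
  norm_num at h0 h1 h2 h3 h4 h5 h6 h7 h8
  intro k hk l hl
  rw [hI] at hk hl
  fin_cases hk <;> fin_cases hl <;> linarith
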